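/- arXiv:1705.04183 — 6 statements merged into one kernel-verified Lean document; each statement's English description precedes it below -/
import Mathlib

section
/- Let α be a rational number that is not zero or a negative integer, and write α = r/s with r, s coprime integers, s ≥ 1. Then the formal power series Σ_{n=0}^∞ (α)_n z^n, where (α)_n is the Pochhammer symbol, converges in ℚ_p at every z with |z|_p ≤ 1 whenever p does not divide s. -/
/-!
Since `p ∤ s`, `α` is a `p`-adic integer. For a `p`-adic integer `x`, the factor `x + i`
of `(x)_p` with `i ≡ -x (mod p)` is divisible by `p`, so `p ∣ (x)_p`; splitting `(x)_n`
into blocks of length `p` gives `p ^ ⌊n/p⌋ ∣ (x)_n`, hence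
`|(α)_n z^n|_p ≤ p ^ (-⌊n/p⌋) → 0`.
-/

open Polynomial Filter

section Pochhammer

variable {S T : Type*}

theorem map_ascPochhammer_eval [Semiring S] [Semiring T] (f : S →+* T) (n : ℕ) (s : S) :
    f ((ascPochhammer S n).eval s) = (ascPochhammer T n).eval (f s) := by
  rw [ascPochhammer_eval₂ f, eval₂_hom]

theorem X_add_natCast_dvd_ascPochhammer [CommSemiring S] {k n : ℕ} (h : k < n) :
    X + (k : S[X]) ∣ ascPochhammer S n := by
  obtain ⟨m, rfl⟩ := Nat.exists_eq_add_of_lt h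
  rw [Nat.add_right_comm, ← ascPochhammer_mul S (k + 1) m, ascPochhammer_succ_right]
  exact (dvd_mul_left _ _).mul_right _

theorem ascPochhammer_eval_add [CommSemiring S] (n m : ℕ) (x : S) :
    (ascPochhammer S (n + m)).eval x =
      (ascPochhammer S n).eval x * (ascPochhammer S m).eval (x + n) := by
  rw [← ascPochhammer_mul S, eval_mul, eval_comp, eval_add, eval_X, eval_natCast]

theorem pow_div_dvd_ascPochhammer_eval [CommSemiring S] {c : S} {m : ℕ}
    (hc : ∀ y, c ∣ (ascPochhammer S m).eval y) (x : S) (n : ℕ) :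
    c ^ (n / m) ∣ (ascPochhammer S n).eval x := by
  suffices h : ∀ q r : ℕ, c ^ q ∣ (ascPochhammer S (r + m * q)).eval x by
    simpa only [Nat.mod_add_div] using h (n / m) (n % m)
  intro q r
  induction q with
  | zero => simp
  | succ q ih =>
    rw [mul_add_one, ← add_assoc, ascPochhammer_eval_add, pow_succ]
    exact mul_dvd_mul ih (hc _)

end Pochhammer

namespace PadicInt

variable {p : ℕ} [Fact p.Prime]

theorem prime_dvd_ascPochhammer_eval (y : ℤ_[p]) :
    (p : ℤ_[p]) ∣ (ascPochhammer ℤ_[p] p).eval y := by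
  have hk : toZMod (y + ((-toZMod y).val : ℤ_[p])) = 0 := by simp
  have hdvd : (p : ℤ_[p]) ∣ y + ((-toZMod y).val : ℤ_[p]) := by
    rwa [← Ideal.mem_span_singleton, ← maximalIdeal_eq_span_p, ← ker_toZMod]
  have hfactor := eval_dvd (x := y)
    (X_add_natCast_dvd_ascPochhammer (S := ℤ_[p]) (ZMod.val_lt (-toZMod y)))
  rw [eval_add, eval_X, eval_natCast] at hfactor
  exact hdvd.trans hfactor

theorem norm_ascPochhammer_eval_le (x : ℤ_[p]) (n : ℕ) :
    ‖(ascPochhammer ℤ_[p] n).eval x‖ ≤ (p : ℝ)⁻¹ ^ (n / p) := by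
  rw [inv_pow, ← zpow_natCast, ← zpow_neg, norm_le_pow_iff_mem_span_pow,
    Ideal.mem_span_singleton]
  exact pow_div_dvd_ascPochhammer_eval prime_dvd_ascPochhammer_eval x n

end PadicInt

theorem tendsto_pow_div_atTop_nhds_zero {r : ℝ} (hr₀ : 0 ≤ r) (hr₁ : r < 1) {m : ℕ}
    (hm : m ≠ 0) : Tendsto (fun n : ℕ => r ^ (n / m)) atTop (nhds 0) :=
  (tendsto_pow_atTop_nhds_zero_of_lt_one hr₀ hr₁).comp (Nat.tendsto_div_const_atTop hm)

theorem stmt_4_general (α : ℚ) (p : ℕ) [Fact p.Prime]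
    (hp : ¬ p ∣ α.den) (z : ℚ_[p]) (hz : ‖z‖ ≤ 1) :
    Filter.Tendsto
      (fun n : ℕ => (((ascPochhammer ℚ n).eval α : ℚ) : ℚ_[p]) * z ^ n)
      Filter.atTop (nhds 0) := by
  have hp₁ : (1 : ℝ) < p := mod_cast (Fact.out : p.Prime).one_lt
  let x : ℤ_[p] := ⟨α, Padic.norm_rat_le_one hp⟩
  have hbound (n : ℕ) : ‖(((ascPochhammer ℚ n).eval α : ℚ) : ℚ_[p]) * z ^ n‖ ≤
      (p : ℝ)⁻¹ ^ (n / p) := by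
    have hcast :
        (((ascPochhammer ℚ n).eval α : ℚ) : ℚ_[p]) = (ascPochhammer ℤ_[p] n).eval x := by
      rw [← Rat.coe_castHom, map_ascPochhammer_eval]
      exact (map_ascPochhammer_eval PadicInt.Coe.ringHom n x).symm
    rw [norm_mul, hcast, PadicInt.padic_norm_e_of_padicInt, norm_pow]
    exact (mul_le_of_le_one_right (norm_nonneg _) (pow_le_one₀ (norm_nonneg _) hz)).trans
      (PadicInt.norm_ascPochhammer_eval_le x n)
  exact squeeze_zero_norm hbound (tendsto_pow_div_atTop_nhds_zero (by positivity)
    (inv_lt_one_of_one_lt₀ hp₁) (Fact.out : p.Prime).ne_zero)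

theorem stmt_4 (α : ℚ) (hα : ∀ k : ℕ, α ≠ -(k : ℚ)) (p : ℕ) [Fact p.Prime]
    (hp : ¬ p ∣ α.den) (z : ℚ_[p]) (hz : ‖z‖ ≤ 1) :
    Filter.Tendsto
      (fun n : ℕ => (((ascPochhammer ℚ n).eval α : ℚ) : ℚ_[p]) * z ^ n)
      Filter.atTop (nhds 0) :=
  stmt_4_general α p hp z hz
end

section
/- Let α = r/s with r ∈ ℤ, s ≥ 1, gcd(r,s) = 1, and α not a negative integer or 0. Write (α+1)_n / n! = u_n / v_n in lowest terms with v_n ≥ 1. Then v_n divides s^{2n}, and u_n divides ∏_{p ∤ s} p^{⌊log(|r| + s n)/log p⌋} (product over primes p not dividing s). -/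
/-! Since `α + 1 = (r + s) / s`, the quotient `(α + 1)_n / n!` equals `P / (s ^ n * n!)` with
`P = ∏_{i < n} (r + s + s i)`, a product of `n` consecutive terms of an arithmetic progression of
difference `s`. For a prime `p ∤ s` the terms divisible by `p ^ k` are those whose index lies in one
residue class mod `p ^ k`: there are `⌊n / p ^ k⌋` or `⌊n / p ^ k⌋ + 1` of them, and none once
`p ^ k > |r| + s n`. Summing over `k` and comparing with Legendre's formula gives
`v_p(n!) ≤ v_p(P) ≤ v_p(n!) + ⌊log_p (|r| + s n)⌋`. The first inequality, with `v_p(n!) ≤ n` for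
`p ∣ s`, shows `n! ∣ P s ^ n`, so the quotient is `B / s ^ (2 n)` with `B` an integer; the second
bounds `v_p(B)` for `p ∤ s`, and the numerator, a divisor of both `B` and `P`, is prime to `s`
because `gcd(r, s) = 1`. -/

open Finset

lemma ascPochhammer_eval_intCast_div (a : ℤ) {s : ℕ} (hs : s ≠ 0) (n : ℕ) :
    (ascPochhammer ℚ n).eval ((a : ℚ) / s) = ((∏ i ∈ range n, (a + s * i) : ℤ) : ℚ) / s ^ n := by
  induction n with
  | zero => simp
  | succ n ih =>
    rw [ascPochhammer_succ_eval, ih, prod_range_succ, pow_succ]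
    push_cast
    field_simp

lemma Rat.den_intCast_div_natCast_dvd (a : ℤ) (b : ℕ) : ((a : ℚ) / b).den ∣ b := by
  have := Rat.den_dvd a b
  rw [Rat.divInt_eq_div] at this
  exact_mod_cast this

lemma Rat.num_intCast_div_natCast_dvd (a : ℤ) {b : ℕ} (hb : b ≠ 0) : ((a : ℚ) / b).num ∣ a := by
  have := Rat.num_dvd a (Int.natCast_ne_zero.mpr hb)
  rwa [Rat.divInt_eq_div, Int.cast_natCast] at this

lemma dvd_prod_pow_log_of_coprime {N s M : ℕ} (hN : N ≠ 0) (hNs : N.Coprime s)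
    (hval : ∀ p, p.Prime → ¬ p ∣ s → N.factorization p ≤ Nat.log p M) :
    N ∣ ∏ p ∈ range (M + 1) with p.Prime ∧ ¬ p ∣ s, p ^ Nat.log p M := by
  have hX : ∏ p ∈ range (M + 1) with p.Prime ∧ ¬ p ∣ s, p ^ Nat.log p M ≠ 0 :=
    prod_ne_zero_iff.mpr fun p hp => pow_ne_zero _ (mem_filter.mp hp).2.1.ne_zero
  refine (Nat.factorization_prime_le_iff_dvd hN hX).mp fun p hp => ?_
  by_cases hps : p ∣ s
  · rw [Nat.factorization_eq_zero_of_not_dvd fun hpN => hp.not_dvd_one (hNs ▸ Nat.dvd_gcd hpN hps)]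
    exact Nat.zero_le _
  refine (hval p hp hps).trans ?_
  by_cases hpM : p ≤ M
  · refine (hp.pow_dvd_iff_le_factorization hX).mp (dvd_prod_of_mem _ ?_)
    simp [hp, hps, Nat.lt_succ_of_le hpM]
  · simp [Nat.log_of_lt (not_le.mp hpM)]

section ArithmeticProgression

variable (a : ℤ) {s : ℕ}

lemma exists_dvd_add_mul_iff_modEq {m : ℕ} [NeZero m] (hs : s.Coprime m) :
    ∃ c : ℕ, ∀ i : ℕ, (m : ℤ) ∣ a + s * i ↔ i ≡ c [MOD m] := by
  set u := ZMod.unitOfCoprime s hs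
  refine ⟨(-(a : ZMod m) * ↑u⁻¹).val, fun i => ?_⟩
  rw [← ZMod.intCast_zmod_eq_zero_iff_dvd, ← ZMod.natCast_eq_natCast_iff, ZMod.natCast_zmod_val,
    Units.eq_mul_inv_iff_mul_eq, ZMod.coe_unitOfCoprime]
  push_cast
  constructor <;> intro h <;> linear_combination h

lemma card_filter_dvd_add_mul_mem_Icc {m : ℕ} (hm : 0 < m) (hs : s.Coprime m) (n : ℕ) :
    #{i ∈ range n | (m : ℤ) ∣ a + s * (i : ℕ)} ∈ Icc (n / m) (n / m + 1) := by
  have := NeZero.of_pos hm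
  obtain ⟨c, hc⟩ := exists_dvd_add_mul_iff_modEq a hs
  rw [filter_congr fun i _ => hc i, ← Nat.count_eq_card_filter_range, Nat.count_modEq_card n hm,
    mem_Icc]
  split_ifs <;> omega

lemma isCoprime_prod_add_mul {a : ℤ} (ha : IsCoprime a s) (n : ℕ) :
    IsCoprime (∏ i ∈ range n, (a + s * i)) s :=
  IsCoprime.prod_left fun i _ => ha.add_mul_left_left i

variable {a} {n : ℕ}

lemma factorization_natAbs_prod_add_mul {p b : ℕ} (hp : p.Prime) (hne : ∀ i < n, a + s * i ≠ 0)
    (hlt : ∀ i < n, (a + s * i).natAbs < p ^ b) :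
    (∏ i ∈ range n, (a + s * i)).natAbs.factorization p =
      ∑ k ∈ Ico 1 b, #{i ∈ range n | ((p ^ k : ℕ) : ℤ) ∣ a + s * (i : ℕ)} := by
  have hne' : ∀ i ∈ range n, (a + s * i).natAbs ≠ 0 := fun i hi =>
    Int.natAbs_ne_zero.mpr (hne i (mem_range.mp hi))
  rw [show (∏ i ∈ range n, (a + s * i)).natAbs = ∏ i ∈ range n, (a + s * i).natAbs from
    map_prod Int.natAbsHom _ _, Nat.factorization_prod hne', Finsupp.finsetSum_apply]
  simp only [card_filter, Int.natCast_dvd]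
  rw [sum_comm]
  refine sum_congr rfl fun i hi => ?_
  rw [Nat.factorization_eq_card_pow_dvd_of_lt hp
    (Nat.pos_of_ne_zero (hne' i hi)) (hlt i (mem_range.mp hi)), card_filter]

lemma prod_add_mul_ne_zero (hne : ∀ i < n, a + s * i ≠ 0) : ∏ i ∈ range n, (a + s * i) ≠ 0 :=
  prod_ne_zero_iff.mpr fun i hi => hne i (mem_range.mp hi)

variable {M : ℕ} (hne : ∀ i < n, a + s * i ≠ 0)
  (hle : ∀ i < n, (a + s * i).natAbs ≤ M) (hnM : n ≤ M)
include hne hle hnM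

lemma factorization_factorial_le_natAbs_prod_add_mul {p : ℕ} (hp : p.Prime) (hps : ¬ p ∣ s) :
    n.factorial.factorization p ≤ (∏ i ∈ range n, (a + s * i)).natAbs.factorization p := by
  have hlt : ∀ i < n, (a + s * i).natAbs < p ^ (Nat.log p M + 1) :=
    fun i hi => (hle i hi).trans_lt (Nat.lt_pow_succ_log_self hp.one_lt M)
  rw [Nat.factorization_factorial hp (Nat.lt_succ_of_le (Nat.log_mono_right hnM)),
    factorization_natAbs_prod_add_mul hp hne hlt]
  refine sum_le_sum fun k _ => (mem_Icc.mp (card_filter_dvd_add_mul_mem_Icc a (pow_pos hp.pos k)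
    ((hp.coprime_iff_not_dvd.mpr hps).symm.pow_right k) n)).1

lemma natAbs_prod_add_mul_factorization_le {p : ℕ} (hp : p.Prime) (hps : ¬ p ∣ s) :
    (∏ i ∈ range n, (a + s * i)).natAbs.factorization p ≤
      n.factorial.factorization p + Nat.log p M := by
  have hlt : ∀ i < n, (a + s * i).natAbs < p ^ (Nat.log p M + 1) :=
    fun i hi => (hle i hi).trans_lt (Nat.lt_pow_succ_log_self hp.one_lt M)
  rw [Nat.factorization_factorial hp (Nat.lt_succ_of_le (Nat.log_mono_right hnM)),
    factorization_natAbs_prod_add_mul hp hne hlt]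
  calc _ ≤ ∑ k ∈ Ico 1 (Nat.log p M + 1), (n / p ^ k + 1) :=
        sum_le_sum fun k _ => (mem_Icc.mp (card_filter_dvd_add_mul_mem_Icc a (pow_pos hp.pos k)
          ((hp.coprime_iff_not_dvd.mpr hps).symm.pow_right k) n)).2
    _ = _ := by simp [sum_add_distrib]

lemma factorial_dvd_prod_add_mul_mul_pow (hs : s ≠ 0) :
    (n.factorial : ℤ) ∣ (∏ i ∈ range n, (a + s * i)) * s ^ n := by
  have hP := Int.natAbs_ne_zero.mpr (prod_add_mul_ne_zero hne)
  rw [Int.natCast_dvd, Int.natAbs_mul, Int.natAbs_pow, Int.natAbs_natCast]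
  refine (Nat.factorization_prime_le_iff_dvd n.factorial_ne_zero (by positivity)).mp fun p hp => ?_
  rw [Nat.factorization_mul hP (by positivity), Nat.factorization_pow]
  simp only [Finsupp.add_apply, Finsupp.smul_apply, smul_eq_mul]
  by_cases hps : p ∣ s
  · calc n.factorial.factorization p ≤ n / (p - 1) := Nat.factorization_factorial_le_div_pred hp n
      _ ≤ n * s.factorization p := (Nat.div_le_self n _).trans
          (Nat.le_mul_of_pos_right n (hp.factorization_pos_of_dvd hs hps))
      _ ≤ _ := Nat.le_add_left _ _
  · exact (factorization_factorial_le_natAbs_prod_add_mul hne hle hnM hp hps).trans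
      (Nat.le_add_right _ _)

lemma factorization_le_log_of_dvd_of_mul_factorial_eq {B : ℤ}
    (hB : (∏ i ∈ range n, (a + s * i)) * s ^ n = n.factorial * B)
    {p : ℕ} (hp : p.Prime) (hps : ¬ p ∣ s) {N : ℕ} (hN : N ∣ B.natAbs) :
    N.factorization p ≤ Nat.log p M := by
  have hP := Int.natAbs_ne_zero.mpr (prod_add_mul_ne_zero hne)
  have hs : s ≠ 0 := by rintro rfl; exact hps (dvd_zero p)
  have hB0 : B.natAbs ≠ 0 := by rintro h; simp_all [Int.natAbs_eq_zero]
  have hval := congrArg (fun x => x.natAbs.factorization p) hB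
  simp only [Int.natAbs_mul, Int.natAbs_pow, Int.natAbs_natCast,
    Nat.factorization_mul hP (pow_ne_zero n hs), Nat.factorization_mul n.factorial_ne_zero hB0,
    Nat.factorization_pow, Finsupp.add_apply, Finsupp.smul_apply, smul_eq_mul,
    Nat.factorization_eq_zero_of_not_dvd hps, mul_zero, add_zero] at hval
  have := natAbs_prod_add_mul_factorization_le hne hle hnM hp hps
  have := (Nat.factorization_le_iff_dvd (ne_zero_of_dvd_ne_zero hB0 hN) hB0).mpr hN p
  omega

end ArithmeticProgression

lemma ascPochhammer_eval_div_factorial_eq {a : ℤ} {s : ℕ} (hs : s ≠ 0) (n : ℕ) :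
    (ascPochhammer ℚ n).eval ((a : ℚ) / s) / n.factorial =
      ((∏ i ∈ range n, (a + s * i) : ℤ) : ℚ) / ((s ^ n * n.factorial : ℕ) : ℚ) := by
  rw [ascPochhammer_eval_intCast_div _ hs, Nat.cast_mul, Nat.cast_pow, div_div]

lemma intCast_div_mul_eq_div_sq {P B : ℤ} {t f : ℕ} (hf : f ≠ 0) (hB : P * t = f * B) :
    (P : ℚ) / ((t * f : ℕ) : ℚ) = B / ((t ^ 2 : ℕ) : ℚ) := by
  have hB' : (P : ℚ) * t = f * B := by exact_mod_cast hB
  rcases eq_or_ne t 0 with rfl | ht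
  · simp
  · push_cast
    field_simp
    linear_combination hB'

lemma add_add_mul_ne_zero {r : ℤ} {s : ℕ} (hs : s ≠ 0) (hα : ∀ k : ℕ, (r : ℚ) / s ≠ -k) (i : ℕ) :
    r + s + s * i ≠ 0 := fun h => hα (i + 1) <| by
  have : (r : ℚ) + s + s * i = 0 := by exact_mod_cast h
  field_simp
  push_cast
  linarith

lemma natAbs_add_add_mul_le (r : ℤ) {s i n : ℕ} (hi : i < n) :
    (r + s + s * i).natAbs ≤ r.natAbs + s * n := calc
  (r + s + s * i).natAbs = (r + (s * (i + 1) : ℕ)).natAbs := by push_cast; ring_nf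
  _ ≤ r.natAbs + s * (i + 1) := (Int.natAbs_add_le _ _).trans_eq (by rw [Int.natAbs_natCast])
  _ ≤ r.natAbs + s * n := by gcongr; omega

theorem stmt_5_general (r : ℤ) (s : ℕ) (hcop : Int.gcd r s = 1)
    (hα : ∀ k : ℕ, (r : ℚ) / s ≠ -(k : ℚ)) (n : ℕ) :
    ((ascPochhammer ℚ n).eval ((r : ℚ) / s + 1) / n.factorial).den ∣ s ^ (2 * n) ∧
    ((ascPochhammer ℚ n).eval ((r : ℚ) / s + 1) / n.factorial).num ∣
      ∏ p ∈ Finset.filter (fun p => Nat.Prime p ∧ ¬ p ∣ s)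
          (Finset.range (r.natAbs + s * n + 1)),
        (p : ℤ) ^ Nat.log p (r.natAbs + s * n) := by
  have hs : s ≠ 0 := by rintro rfl; exact hα 0 (by simp)
  have hne : ∀ i < n, r + s + s * i ≠ 0 := fun i _ => add_add_mul_ne_zero hs hα i
  have hle : ∀ i < n, (r + s + s * i).natAbs ≤ r.natAbs + s * n := fun i => natAbs_add_add_mul_le r
  have hnM : n ≤ r.natAbs + s * n := le_add_left (Nat.le_mul_of_pos_left n (Nat.pos_of_ne_zero hs))
  have hqP := ascPochhammer_eval_div_factorial_eq (a := r + s) hs n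
  rw [Int.cast_add, Int.cast_natCast, add_div, div_self (Nat.cast_ne_zero.mpr hs)] at hqP
  set q := (ascPochhammer ℚ n).eval ((r : ℚ) / s + 1) / n.factorial
  obtain ⟨B, hB⟩ := factorial_dvd_prod_add_mul_mul_pow hne hle hnM hs
  have hqB := hqP.trans (intCast_div_mul_eq_div_sq n.factorial_ne_zero hB)
  rw [← pow_mul, mul_comm n] at hqB
  refine ⟨hqB ▸ Rat.den_intCast_div_natCast_dvd B _, ?_⟩
  have hD : s ^ n * n.factorial ≠ 0 := mul_ne_zero (pow_ne_zero n hs) n.factorial_ne_zero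
  have hnum_coprime : q.num.natAbs.Coprime s := Int.isCoprime_iff_nat_coprime.mp <|
    (isCoprime_prod_add_mul (s := s) (by
      simpa using (Int.isCoprime_iff_gcd_eq_one.mpr hcop).add_mul_left_left (1 : ℤ)) n
    ).of_isCoprime_of_dvd_left (hqP ▸ Rat.num_intCast_div_natCast_dvd _ hD)
  have hq0 : q ≠ 0 := by
    rw [hqP]
    exact div_ne_zero (Int.cast_ne_zero.mpr (prod_add_mul_ne_zero hne)) (Nat.cast_ne_zero.mpr hD)
  have hnum_ne_zero := Int.natAbs_ne_zero.mpr (Rat.num_ne_zero.mpr hq0)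
  exact_mod_cast Int.dvd_natCast.mpr <| dvd_prod_pow_log_of_coprime hnum_ne_zero hnum_coprime
    fun p hp hps => factorization_le_log_of_dvd_of_mul_factorial_eq hne hle hnM hB hp hps <|
      Int.natAbs_dvd_natAbs.mpr (hqB ▸ Rat.num_intCast_div_natCast_dvd B (pow_ne_zero _ hs))

theorem stmt_5 (r : ℤ) (s : ℕ) (hs : 1 ≤ s) (hcop : Int.gcd r s = 1)
    (hα : ∀ k : ℕ, (r : ℚ) / s ≠ -(k : ℚ)) (n : ℕ) :
    ((ascPochhammer ℚ n).eval ((r : ℚ) / s + 1) / n.factorial).den ∣ s ^ (2 * n) ∧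
    ((ascPochhammer ℚ n).eval ((r : ℚ) / s + 1) / n.factorial).num ∣
      ∏ p ∈ Finset.filter (fun p => Nat.Prime p ∧ ¬ p ∣ s)
          (Finset.range (r.natAbs + s * n + 1)),
        (p : ℤ) ^ Nat.log p (r.natAbs + s * n) :=
  stmt_5_general r s hcop hα n
end

section
/- For every real x > 1, the number of primes π(x) satisfies π(x) ≤ 8 log 2 · x / log x. -/
/-!
Split the primes up to `x` at `√x`. There are at most `√x` primes below `√x`, and each prime in
`(√x, x]` contributes more than `log √x = log x / 2` to `θ x ≤ x log 4`, so
`π x ≤ √x + 4 log 2 · x / log x`. Finally `√x ≤ 4 log 2 · x / log x` because `log x ≤ 2√x`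
and `2 log 2 > 1`.
-/

open Real Finset Chebyshev
open scoped Nat.Prime

lemma Nat.card_primesLE_le (n : ℕ) : #(Nat.primesLE n) ≤ n := by
  rw [Nat.primesLE_eq_filter_Icc_one]
  exact (card_filter_le _ _).trans (by simp)

lemma Real.log_le_two_mul_sqrt {x : ℝ} (hx : 0 ≤ x) : log x ≤ 2 * √x := by
  have h := log_le_rpow_div hx (ε := 1 / 2) (by norm_num)
  rwa [← sqrt_eq_rpow, div_div_eq_mul_div, div_one, mul_comm] at h

lemma Chebyshev.card_filter_floor_lt_mul_log_le_theta {x y : ℝ} (hy : 0 < y) :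
    #{p ∈ Nat.primesLE ⌊x⌋₊ | ⌊y⌋₊ < p} * log y ≤ θ x := by
  rw [theta_eq_sum_primesLE, ← nsmul_eq_mul, ← sum_const]
  calc ∑ _ ∈ Nat.primesLE ⌊x⌋₊ with ⌊y⌋₊ < _, log y
      ≤ ∑ p ∈ Nat.primesLE ⌊x⌋₊ with ⌊y⌋₊ < p, log p := by
        gcongr with p hp
        exact ((Nat.floor_lt hy.le).1 (mem_filter.1 hp).2).le
    _ ≤ ∑ p ∈ Nat.primesLE ⌊x⌋₊, log p :=
        sum_le_sum_of_subset_of_nonneg (filter_subset _ _) fun p _ _ ↦ log_natCast_nonneg p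

lemma Chebyshev.primeCounting_le_add_theta_div_log {x y : ℝ} (hy : 1 < y) :
    (π ⌊x⌋₊ : ℝ) ≤ y + θ x / log y := by
  have hy0 : 0 < y := one_pos.trans hy
  have small : #{p ∈ Nat.primesLE ⌊x⌋₊ | ¬ ⌊y⌋₊ < p} ≤ ⌊y⌋₊ := by
    refine (card_le_card fun p hp ↦ ?_).trans (Nat.card_primesLE_le ⌊y⌋₊)
    simp only [mem_filter, Nat.mem_primesLE, not_lt] at hp ⊢
    exact ⟨hp.2, hp.1.2⟩
  have large := card_filter_floor_lt_mul_log_le_theta (x := x) hy0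
  rw [← Nat.primesLE_card_eq_primeCounting, ← card_filter_add_card_filter_not (⌊y⌋₊ < ·),
    Nat.cast_add, add_comm]
  exact add_le_add ((Nat.cast_le.2 small).trans (Nat.floor_le hy0.le))
    ((le_div_iff₀ (log_pos hy)).2 large)

theorem stmt_7 (x : ℝ) (hx : 1 < x) :
    ((Finset.filter Nat.Prime (Finset.range (⌊x⌋₊ + 1))).card : ℝ) ≤
      8 * Real.log 2 * x / Real.log x := by
  have hx0 : 0 ≤ x := zero_le_one.trans hx.le
  have hlogx : 0 < log x := log_pos hx
  have hsqrt : 1 < √x := by simpa using sqrt_lt_sqrt zero_le_one hx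
  have hlog2 : 1 / 2 < log 2 := lt_trans (by norm_num) log_two_gt_d9
  have hsqrt_le : √x ≤ 4 * log 2 * x / log x := by
    rw [le_div_iff₀ hlogx]
    calc √x * log x ≤ √x * (2 * √x) := by gcongr; exact log_le_two_mul_sqrt hx0
      _ = 2 * x := by rw [← mul_assoc, mul_comm _ 2, mul_assoc, mul_self_sqrt hx0]
      _ ≤ 4 * log 2 * x := by gcongr; linarith
  have htheta_le : θ x / log √x ≤ 4 * log 2 * x / log x := by
    rw [log_sqrt hx0, div_div_eq_mul_div, div_le_div_iff_of_pos_right hlogx]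
    have hlog4 : log 4 = 2 * log 2 := by
      rw [show (4 : ℝ) = 2 ^ 2 by norm_num, log_pow, Nat.cast_ofNat]
    linarith [hlog4 ▸ theta_le_log4_mul_x hx0]
  calc ((Nat.primesLE ⌊x⌋₊).card : ℝ) = π ⌊x⌋₊ := by rw [Nat.primesLE_card_eq_primeCounting]
    _ ≤ √x + θ x / log √x := primeCounting_le_add_theta_div_log hsqrt
    _ ≤ 4 * log 2 * x / log x + 4 * log 2 * x / log x := add_le_add hsqrt_le htheta_le
    _ = 8 * log 2 * x / log x := by ring
end

section
/- For every real x ≥ 2, the sum Σ_{p ≤ x} (log p)/p over primes p at most x is bounded above by log x + 6. -/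
/-!
With `n = ⌊x⌋` we have `x < n + 1 ≤ (n / p + 1) * p`, so
`x * ∑ log p / p ≤ ∑ (n / p) * log p + ∑ log p`. By Legendre, `n / p` is at most the multiplicity
of `p` in `n!`, so the first sum is at most `log n! ≤ n log n`; the second is Chebyshev's
`θ(n) ≤ n log 4`. Dividing by `x` gives the bound with the constant `log 4 < 6`.
-/

open Finset Real
open scoped Nat

namespace Nat

theorem div_le_factorization_factorial {p : ℕ} (hp : p.Prime) (n : ℕ) :
    n / p ≤ (n !).factorization p := by
  rw [factorization_factorial hp (by omega : log p n < log p n + 2)]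
  simpa using single_le_sum (f := fun i => n / p ^ i) (fun _ _ => zero_le _)
    (by simp : 1 ∈ Ico 1 (log p n + 2))

theorem support_factorization_factorial_subset (n : ℕ) :
    (n !).factorization.support ⊆ primesLE n := fun p hp => by
  rw [support_factorization] at hp
  have hprime := prime_of_mem_primeFactors hp
  exact mem_primesLE.2 ⟨(hprime.dvd_factorial).1 (dvd_of_mem_primeFactors hp), hprime⟩

end Nat

theorem Real.log_factorial_eq_sum_primesLE (n : ℕ) :
    log (n ! : ℝ) = ∑ p ∈ n.primesLE, (n !).factorization p * log p := by
  rw [log_nat_eq_sum_factorization]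
  exact Finsupp.sum_of_support_subset _ (Nat.support_factorization_factorial_subset n) _
    (by simp)

theorem Real.log_factorial_le_mul_log (n : ℕ) : log (n ! : ℝ) ≤ n * log n := by
  calc log (n ! : ℝ) ≤ log ((n : ℝ) ^ n) :=
        log_le_log (by positivity) (mod_cast Nat.factorial_le_pow n)
    _ = n * log n := log_pow n n

theorem sum_primesLE_div_mul_log_le_log_factorial (n : ℕ) :
    ∑ p ∈ n.primesLE, ((n / p : ℕ) : ℝ) * log p ≤ log (n ! : ℝ) := by
  rw [log_factorial_eq_sum_primesLE]
  gcongr with p hp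
  exact Nat.div_le_factorization_factorial (Nat.prime_of_mem_primesLE hp) n

theorem sum_primesLE_log_le (n : ℕ) : ∑ p ∈ n.primesLE, log p ≤ log 4 * n := by
  rw [← Chebyshev.theta_eq_sum_primesLE_log]
  exact Chebyshev.theta_le_log4_mul_x n.cast_nonneg

theorem div_le_natDiv_add_one {x : ℝ} {n p : ℕ} (hp : 0 < p) (hxn : x < n + 1) :
    x / p ≤ (n / p : ℕ) + 1 := by
  have : n + 1 ≤ (n / p + 1) * p := Nat.lt_div_mul_add hp |>.trans_eq (by ring)
  rw [div_le_iff₀ (mod_cast hp)]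
  exact hxn.le.trans (mod_cast this)

theorem sum_primesLE_floor_log_div_le {x : ℝ} (hx : 1 ≤ x) :
    ∑ p ∈ ⌊x⌋₊.primesLE, log p / p ≤ log x + log 4 := by
  set n := ⌊x⌋₊
  have hx0 : 0 < x := by linarith
  have hnx : (n : ℝ) ≤ x := Nat.floor_le hx0.le
  have hlogn : log n ≤ log x := by
    rcases n.eq_zero_or_pos with hn | hn
    · simpa [hn] using log_nonneg hx
    · exact log_le_log (mod_cast hn) hnx
  suffices x * ∑ p ∈ n.primesLE, log p / p ≤ x * (log x + log 4) from
    le_of_mul_le_mul_left this hx0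
  calc x * ∑ p ∈ n.primesLE, log p / p
      = ∑ p ∈ n.primesLE, x / p * log p := by
        rw [mul_sum]; exact sum_congr rfl fun p _ => by ring
    _ ≤ ∑ p ∈ n.primesLE, (((n / p : ℕ) : ℝ) + 1) * log p := by
        gcongr with p hp
        exact div_le_natDiv_add_one (Nat.prime_of_mem_primesLE hp).pos (Nat.lt_floor_add_one x)
    _ = ∑ p ∈ n.primesLE, ((n / p : ℕ) : ℝ) * log p + ∑ p ∈ n.primesLE, log p := by
        rw [← sum_add_distrib]; exact sum_congr rfl fun p _ => by ring
    _ ≤ n * log n + log 4 * n := add_le_add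
        ((sum_primesLE_div_mul_log_le_log_factorial n).trans (log_factorial_le_mul_log n))
        (sum_primesLE_log_le n)
    _ ≤ x * log x + log 4 * x := by gcongr
    _ = x * (log x + log 4) := by ring

theorem stmt_8 (x : ℝ) (hx : 2 ≤ x) :
    ∑ p ∈ Finset.filter Nat.Prime (Finset.range (⌊x⌋₊ + 1)), Real.log p / p ≤
      Real.log x + 6 := by
  have hlog4 : log 4 ≤ 6 := by
    linarith [log_le_sub_one_of_pos (by norm_num : (0 : ℝ) < 4)]
  rw [← Nat.primesLE_eq_filter_range]
  linarith [sum_primesLE_floor_log_div_le (by linarith : (1 : ℝ) ≤ x)]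
end

section
/- Let m ≥ 1, let α_1, ..., α_m be rational numbers, none of which is 0 or a negative integer, with α_i − α_j ∉ ℤ for i ≠ j, and let n ≥ 1, N = mn. Then there exist polynomials Q(z) ≠ 0 of degree exactly N and P_1(z), ..., P_m(z) with deg P_j ≤ N, all with rational coefficients, such that for each j = 1, ..., m the formal power series Q(z)·Σ_{k≥0}(α_j)_k z^k − P_j(z) has order at z = 0 at least N + n + 1. -/
/-!
Let `F(x) = ∏ⱼ ∏_{s=1}^{n} (x - αⱼ - s)`, a polynomial of degree `N = mn`, and expand it in the
Pochhammer basis, `F(x) = ∑_{k ≤ N} c_k (x)_k`. Take `Q(z) = ∑_{k ≤ N} c_k z^{N-k}`. For `t = N + s`,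
the identity `(α)_{s+k} = (α)_s (α+s)_k` gives
`[z^{N+s}] Q(z) ∑ (α)_k z^k = ∑_k c_k (α)_{s+k} = (α)_s F(α + s)`,
which vanishes for `1 ≤ s ≤ n` and `α = αⱼ`. So `Pⱼ` can be the truncation of `Q φⱼ` to degree `N`.
Finally `Q` has degree exactly `N` because its leading coefficient is `c₀ = F(0)`, which is nonzero
as no `αⱼ` is a nonpositive integer.
-/

open Polynomial Finset

namespace Polynomial

variable {R : Type*} [CommRing R]

theorem exists_eq_sum_C_mul_ascPochhammer [IsDomain R] (d : ℕ) (F : R[X]) (hF : F.natDegree ≤ d) :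
    ∃ c : ℕ → R, F = ∑ k ∈ range (d + 1), C (c k) * ascPochhammer R k := by
  induction d generalizing F with
  | zero => exact ⟨fun _ => F.coeff 0, by rw [eq_C_of_natDegree_le_zero hF]; simp⟩
  | succ d ih =>
    have hdeg := ascPochhammer_natDegree (S := R) (d + 1)
    have hlead : (ascPochhammer R (d + 1)).coeff (d + 1) = 1 := by
      simpa [hdeg] using (monic_ascPochhammer R (d + 1)).coeff_natDegree
    set G := F - C (F.coeff (d + 1)) * ascPochhammer R (d + 1)
    have hG : G.natDegree ≤ d := by
      rw [natDegree_le_iff_coeff_eq_zero]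
      intro i hi
      rcases (Nat.succ_le_of_lt hi).eq_or_lt with rfl | hi
      · simp [G, hlead]
      · simp [G, coeff_eq_zero_of_natDegree_lt (hF.trans_lt hi),
          coeff_eq_zero_of_natDegree_lt (hdeg.trans_lt hi)]
    obtain ⟨c, hc⟩ := ih G hG
    refine ⟨Function.update c (d + 1) (F.coeff (d + 1)), ?_⟩
    rw [sum_range_succ, Function.update_self,
      sum_congr rfl fun k hk => by rw [Function.update_of_ne (by simp at hk; omega)], ← hc]
    ring

theorem eval_zero_sum_C_mul_ascPochhammer (c : ℕ → R) (N : ℕ) :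
    (∑ k ∈ range (N + 1), C (c k) * ascPochhammer R k).eval 0 = c 0 := by
  simp [eval_finsetSum, ascPochhammer_eval_zero]

theorem coeff_sum_C_mul_X_pow_sub_self (c : ℕ → R) (N : ℕ) :
    (∑ k ∈ range (N + 1), C (c k) * X ^ (N - k)).coeff N = c 0 := by
  rw [finsetSum_coeff, sum_eq_single 0 (fun k hk hk0 => by
    rw [coeff_C_mul_X_pow, if_neg (by simp at hk; omega)]) (by simp)]
  simp

theorem natDegree_sum_C_mul_X_pow_sub_le (c : ℕ → R) (N : ℕ) :
    (∑ k ∈ range (N + 1), C (c k) * X ^ (N - k)).natDegree ≤ N :=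
  natDegree_sum_le_of_forall_le _ _ fun _ _ =>
    (natDegree_C_mul_X_pow_le _ _).trans (Nat.sub_le _ _)

end Polynomial

theorem PowerSeries.le_order_sub_trunc {R : Type*} [CommRing R] (f : PowerSeries R) (N n : ℕ)
    (h : ∀ s, 1 ≤ s → s ≤ n → coeff (N + s) f = 0) :
    ((N + n + 1 : ℕ) : ℕ∞) ≤ (f - trunc (N + 1) f).order := by
  refine nat_le_order _ _ fun i hi => ?_
  rw [map_sub, Polynomial.coeff_coe, coeff_trunc]
  split_ifs with hiN
  · exact sub_self _
  · obtain ⟨s, rfl⟩ := Nat.exists_eq_add_of_lt (not_lt.mp hiN)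
    rw [sub_zero]
    exact h (s + 1) (by omega) (by omega)

section AscPochhammerSeries

variable {R : Type*} [CommRing R]

noncomputable def ascPochhammerSeries (a : R) : PowerSeries R :=
  PowerSeries.mk fun k => (ascPochhammer R k).eval a

theorem coeff_add_sum_C_mul_X_pow_sub_mul_ascPochhammerSeries (c : ℕ → R) (N s : ℕ) (a : R) :
    PowerSeries.coeff (N + s)
        (((∑ k ∈ range (N + 1), C (c k) * X ^ (N - k) : R[X]) : PowerSeries R) *
          ascPochhammerSeries a) =
      (ascPochhammer R s).eval a *
        (∑ k ∈ range (N + 1), C (c k) * ascPochhammer R k).eval (a + s) := by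
  rw [← coeToPowerSeries.ringHom_apply, map_sum, sum_mul, map_sum, eval_finsetSum, mul_sum]
  refine sum_congr rfl fun k hk => ?_
  have hk : k ≤ N := Nat.lt_succ_iff.mp (mem_range.mp hk)
  have hmul : (ascPochhammer R (s + k)).eval a =
      (ascPochhammer R s).eval a * (ascPochhammer R k).eval (a + s) := by
    simpa using congrArg (eval a) (ascPochhammer_mul R s k).symm
  rw [coeToPowerSeries.ringHom_apply, Polynomial.coe_mul, coe_C, Polynomial.coe_pow, coe_X,
    mul_comm (PowerSeries.C _), mul_assoc, PowerSeries.coeff_X_pow_mul', if_pos (by omega),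
    PowerSeries.coeff_C_mul, ascPochhammerSeries, PowerSeries.coeff_mk,
    show N + s - (N - k) = s + k by omega, hmul, eval_mul, eval_C]
  ring

end AscPochhammerSeries

section NodePolynomial

variable {R ι : Type*} [CommRing R] [Fintype ι]

noncomputable def nodePolynomial (α : ι → R) (n : ℕ) : R[X] :=
  ∏ j, ∏ s ∈ range n, (X - C (α j + s + 1))

theorem natDegree_nodePolynomial [Nontrivial R] (α : ι → R) (n : ℕ) :
    (nodePolynomial α n).natDegree = Fintype.card ι * n := by
  have hfactor (j : ι) : (∏ s ∈ range n, (X - C (α j + s + 1))).natDegree = n := by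
    rw [natDegree_prod_of_monic _ _ fun s _ => monic_X_sub_C _]
    simp only [natDegree_X_sub_C, sum_const, card_range, smul_eq_mul, mul_one]
  rw [nodePolynomial, natDegree_prod_of_monic _ _ fun j _ =>
    monic_prod_of_monic _ _ fun s _ => monic_X_sub_C _]
  simp only [hfactor, sum_const, card_univ, smul_eq_mul]

theorem nodePolynomial_eval_add_eq_zero (α : ι → R) (n : ℕ) (j : ι) {s : ℕ} (hs : 1 ≤ s)
    (hsn : s ≤ n) : (nodePolynomial α n).eval (α j + s) = 0 := by
  obtain ⟨t, rfl⟩ := Nat.exists_eq_add_of_le' hs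
  rw [nodePolynomial, eval_prod]
  refine prod_eq_zero (mem_univ j) ?_
  rw [eval_prod]
  refine prod_eq_zero (mem_range.mpr (by omega : t < n)) ?_
  simp only [eval_sub, eval_X, eval_C]
  push_cast
  ring

theorem nodePolynomial_eval_zero_ne_zero [IsDomain R] (α : ι → R) (n : ℕ)
    (hα : ∀ j, ∀ k : ℕ, α j ≠ -(k : R)) : (nodePolynomial α n).eval 0 ≠ 0 := by
  simp only [nodePolynomial, eval_prod, eval_sub, eval_X, eval_C, zero_sub]
  refine prod_ne_zero_iff.mpr fun j _ => prod_ne_zero_iff.mpr fun s _ h => hα j (s + 1) ?_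
  push_cast
  linear_combination -h

end NodePolynomial

theorem stmt_17_general (m n : ℕ) (α : Fin m → ℚ)
    (hα : ∀ j, ∀ k : ℕ, α j ≠ -(k : ℚ)) :
    ∃ (Q : Polynomial ℚ) (P : Fin m → Polynomial ℚ),
      Q ≠ 0 ∧ Q.natDegree = m * n ∧ (∀ j, (P j).natDegree ≤ m * n) ∧
      ∀ j, ((m * n + n + 1 : ℕ) : ℕ∞) ≤
        ((Q : PowerSeries ℚ) *
            PowerSeries.mk (fun k => (ascPochhammer ℚ k).eval (α j)) -
          (P j : PowerSeries ℚ)).order := by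
  set N := m * n
  have hF : (nodePolynomial α n).natDegree = N := by
    rw [natDegree_nodePolynomial, Fintype.card_fin]
  obtain ⟨c, hc⟩ := exists_eq_sum_C_mul_ascPochhammer N _ hF.le
  have hc0 : c 0 ≠ 0 := by
    rw [← eval_zero_sum_C_mul_ascPochhammer c N, ← hc]
    exact nodePolynomial_eval_zero_ne_zero α n hα
  set Q : ℚ[X] := ∑ k ∈ range (N + 1), C (c k) * X ^ (N - k)
  have hQN : Q.coeff N ≠ 0 := by rwa [coeff_sum_C_mul_X_pow_sub_self]
  refine ⟨Q, fun j => PowerSeries.trunc (N + 1) (Q * ascPochhammerSeries (α j)),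
    fun hQ => hQN (by rw [hQ, coeff_zero]),
    natDegree_eq_of_le_of_coeff_ne_zero (natDegree_sum_C_mul_X_pow_sub_le c N) hQN,
    fun j => Nat.lt_succ_iff.mp (PowerSeries.natDegree_trunc_lt _ _),
    fun j => PowerSeries.le_order_sub_trunc _ N n fun s hs hsn => ?_⟩
  have hcoeff := coeff_add_sum_C_mul_X_pow_sub_mul_ascPochhammerSeries c N s (α j)
  rwa [← hc, nodePolynomial_eval_add_eq_zero α n j hs hsn, mul_zero] at hcoeff

theorem stmt_17 (m n : ℕ) (hm : 1 ≤ m) (hn : 1 ≤ n) (α : Fin m → ℚ)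
    (hα : ∀ j, ∀ k : ℕ, α j ≠ -(k : ℚ))
    (hdiff : ∀ i j, i ≠ j → ∀ z : ℤ, α i - α j ≠ (z : ℚ)) :
    ∃ (Q : Polynomial ℚ) (P : Fin m → Polynomial ℚ),
      Q ≠ 0 ∧ Q.natDegree = m * n ∧ (∀ j, (P j).natDegree ≤ m * n) ∧
      ∀ j, ((m * n + n + 1 : ℕ) : ℕ∞) ≤
        ((Q : PowerSeries ℚ) *
            PowerSeries.mk (fun k => (ascPochhammer ℚ k).eval (α j)) -
          (P j : PowerSeries ℚ)).order :=
  stmt_17_general m n α hα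
end

section
/- Fix an index i with 0-based setup as follows: with γ_0 = n − n_i + 1 + α_i and γ_1, ..., γ_N pairwise distinct and all distinct from γ_0, the system b_0 + b_1 γ_0 + ... + b_N γ_0(γ_0+1)···(γ_0+N−1) = 1, b_0 + b_1 γ_σ + ... + b_N γ_σ(γ_σ+1)···(γ_σ+N−1) = 0 (σ = 1,...,N) has a unique solution, and it is given by k! b_k = Σ_{τ=0}^{k} (−1)^τ C(k,τ) ∏_{s=1}^{N} (γ_s + τ)/(γ_s − γ_0) for k = 0, 1, ..., N. -/
/-!
Let `P` be the Lagrange basis polynomial of the nodes `γ` at `γ 0`. Since `∑ b j • x^(j)` (rising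
factorials) has degree at most `N`, the system says exactly that this polynomial equals `P`, and
the rising factorials form a basis of the polynomials, which gives existence and uniqueness.
Evaluating at `x = -τ`, where `(-τ)^(j) = (-1)^j j! C(τ, j)`, exhibits the values
`P(-τ) = ∏ (γ ℓ + τ) / (γ ℓ - γ 0)` as the binomial transform of `(-1)^j j! b j`; binomial
inversion (the `k`-th forward difference of `τ ↦ C(τ, j)` at `0` is `δ_{jk}`) recovers `k! b k`.
-/

open Finset Polynomial
open scoped Nat

section CommRing

variable {R : Type*} [CommRing R]

lemma ascPochhammer_eval_neg_natCast (k τ : ℕ) :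
    (ascPochhammer R k).eval (-(τ : R)) = (-1) ^ k * k ! * τ.choose k := by
  rw [ascPochhammer_eval_neg_eq_descPochhammer, descPochhammer_eval_eq_descFactorial,
    Nat.descFactorial_eq_factorial_mul_choose]
  push_cast
  ring

lemma sum_range_neg_one_pow_mul_choose_mul_choose (k j : ℕ) :
    ∑ τ ∈ range (k + 1), (-1 : R) ^ τ * k.choose τ * τ.choose j =
      if j = k then (-1) ^ k else 0 := by
  have key : ∑ τ ∈ range (k + 1), (-1 : ℤ) ^ τ * k.choose τ * τ.choose j =
      (-1) ^ k * if k = j then 1 else 0 := by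
    rw [← fwdDiff_iter_choose_zero, fwdDiff_iter_eq_sum_shift, mul_sum]
    refine sum_congr rfl fun τ hτ => ?_
    have hτk : τ ≤ k := Nat.lt_succ_iff.mp (mem_range.mp hτ)
    rw [zero_add, smul_eq_mul, smul_eq_mul, mul_one, ← mul_assoc, ← mul_assoc, ← pow_add,
      show k + (k - τ) = τ + 2 * (k - τ) by omega, pow_add, pow_mul, neg_one_sq, one_pow, mul_one]
  have := congrArg (Int.cast : ℤ → R) key
  push_cast at this
  rw [this, eq_comm]
  by_cases hjk : j = k
  · simp [hjk]
  · simp [hjk, Ne.symm hjk]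

lemma factorial_mul_eq_sum_eval_neg_of_eq_sum_smul_ascPochhammer {n : ℕ} {p : R[X]}
    {b : Fin n → R} (hp : ∑ j, b j • ascPochhammer R j = p) (k : Fin n) :
    ((k : ℕ) ! : R) * b k =
      ∑ τ ∈ range (k + 1), (-1) ^ τ * ((k : ℕ).choose τ) * p.eval (-(τ : R)) := by
  have heval : ∀ τ : ℕ, p.eval (-(τ : R)) = ∑ j, b j * ((-1) ^ (j : ℕ) * (j : ℕ)! * τ.choose j) :=
    fun τ => by simp only [← hp, eval_finsetSum, eval_smul, ascPochhammer_eval_neg_natCast,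
      smul_eq_mul]
  have hdiag : ∀ j : Fin n,
      ∑ τ ∈ range (k + 1), (-1) ^ τ * ((k : ℕ).choose τ : R) * τ.choose j =
        if j = k then (-1) ^ (k : ℕ) else 0 := fun j => by
    rw [sum_range_neg_one_pow_mul_choose_mul_choose]
    exact if_congr Fin.val_inj rfl rfl
  have hsq : (-1 : R) ^ (k : ℕ) * (-1) ^ (k : ℕ) = 1 := by rw [← mul_pow]; simp
  calc ((k : ℕ) ! : R) * b k
      = ∑ j, b j * (-1) ^ (j : ℕ) * (j : ℕ)! * (if j = k then (-1) ^ (k : ℕ) else 0) := by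
        simp only [mul_ite, mul_zero, sum_ite_eq', mem_univ, if_true]
        linear_combination (-((k : ℕ)! * b k)) * hsq
    _ = ∑ j, b j * (-1) ^ (j : ℕ) * (j : ℕ)! *
          ∑ τ ∈ range (k + 1), (-1) ^ τ * ((k : ℕ).choose τ : R) * τ.choose j := by
        simp_rw [hdiag]
    _ = _ := by
        simp_rw [heval, mul_sum]
        rw [sum_comm]
        exact sum_congr rfl fun _ _ => sum_congr rfl fun _ _ => by ring

end CommRing

section Domain

variable (R : Type*) [CommRing R] [IsDomain R]

noncomputable def ascPochhammerSequence : Polynomial.Sequence R where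
  elems' n := ascPochhammer R n
  degree_eq' n := by
    rw [degree_eq_natDegree (monic_ascPochhammer R n).ne_zero, ascPochhammer_natDegree]

lemma linearIndependent_ascPochhammer : LinearIndependent R fun n : ℕ => ascPochhammer R n :=
  (ascPochhammerSequence R).linearIndependent

lemma span_range_ascPochhammer_fin (n : ℕ) :
    Submodule.span R (Set.range fun j : Fin n => ascPochhammer R j) = degreeLT R n := by
  rw [← (ascPochhammerSequence R).span_degreeLT fun i _ => ?_, ← Fin.range_val, ← Set.range_comp]
  · rfl
  · exact (monic_ascPochhammer R i).leadingCoeff.symm ▸ isUnit_one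

variable {R}

lemma sum_smul_ascPochhammer_mem_degreeLT {n : ℕ} (b : Fin n → R) :
    ∑ j, b j • ascPochhammer R j ∈ degreeLT R n := by
  rw [← span_range_ascPochhammer_fin]
  exact Submodule.sum_mem _ fun j _ => Submodule.smul_mem _ _ (Submodule.subset_span ⟨j, rfl⟩)

lemma exists_sum_smul_ascPochhammer_eq {n : ℕ} {p : R[X]} (hp : p ∈ degreeLT R n) :
    ∃ b : Fin n → R, ∑ j, b j • ascPochhammer R j = p := by
  rwa [← span_range_ascPochhammer_fin, Submodule.mem_span_range_iff_exists_fun] at hp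

end Domain

section Field

variable {K : Type*} [Field K]

lemma Lagrange.eval_basis {ι : Type*} [DecidableEq ι] (s : Finset ι) (v : ι → K) (i : ι) (x : K) :
    (Lagrange.basis s v i).eval x = ∏ j ∈ s.erase i, (x - v j) / (v i - v j) := by
  simp [Lagrange.basis, Lagrange.basisDivisor, eval_prod, div_eq_inv_mul]

lemma Lagrange.basis_mem_degreeLT {ι : Type*} [DecidableEq ι] {s : Finset ι} {v : ι → K}
    (hvs : Set.InjOn v s) {i : ι} (hi : i ∈ s) : Lagrange.basis s v i ∈ degreeLT K #s := by
  rw [mem_degreeLT, Lagrange.degree_basis hvs hi]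
  exact_mod_cast Nat.sub_lt (card_pos.mpr ⟨i, hi⟩) one_pos

lemma sum_mul_eval_ascPochhammer_eq_ite_iff {n : ℕ} {γ : Fin n → K} (hγ : Function.Injective γ)
    (i : Fin n) (b : Fin n → K) :
    (∀ ℓ, ∑ j, b j * (ascPochhammer K j).eval (γ ℓ) = if ℓ = i then 1 else 0) ↔
      ∑ j, b j • ascPochhammer K j = Lagrange.basis univ γ i := by
  have hsum : ∀ x, (∑ j, b j • ascPochhammer K j).eval x =
      ∑ j, b j * (ascPochhammer K j).eval x := fun x => by
    simp only [eval_finsetSum, eval_smul, smul_eq_mul]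
  have hbasis : ∀ ℓ, (Lagrange.basis univ γ i).eval (γ ℓ) = if ℓ = i then 1 else 0 := by
    intro ℓ
    split_ifs with hℓ
    · exact hℓ ▸ Lagrange.eval_basis_self hγ.injOn (mem_univ _)
    · exact Lagrange.eval_basis_of_ne (Ne.symm hℓ) (mem_univ _)
  refine ⟨fun h => ?_, fun h ℓ => by rw [← hsum, h, hbasis]⟩
  refine eq_of_degrees_lt_of_eval_index_eq univ hγ.injOn ?_ ?_ fun ℓ _ => ?_
  · simpa using mem_degreeLT.mp (sum_smul_ascPochhammer_mem_degreeLT b)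
  · simpa using mem_degreeLT.mp (Lagrange.basis_mem_degreeLT hγ.injOn (mem_univ i))
  · rw [hsum, h, hbasis]

end Field

theorem stmt_19_general (K : Type*) [Field K] (N : ℕ)
    (γ : Fin (N + 1) → K) (hγ : Function.Injective γ) :
    ∃ b : Fin (N + 1) → K,
      (∀ ℓ, ∑ j : Fin (N + 1), b j * (ascPochhammer K (j : ℕ)).eval (γ ℓ) =
        if ℓ = 0 then 1 else 0) ∧
      (∀ k : Fin (N + 1), ((k : ℕ).factorial : K) * b k =
        ∑ τ ∈ Finset.range ((k : ℕ) + 1), (-1) ^ τ * ((k : ℕ).choose τ) *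
          ∏ ℓ ∈ Finset.univ.erase 0, (γ ℓ + (τ : K)) / (γ ℓ - γ 0)) ∧
      (∀ b' : Fin (N + 1) → K,
        (∀ ℓ, ∑ j : Fin (N + 1), b' j * (ascPochhammer K (j : ℕ)).eval (γ ℓ) =
          if ℓ = 0 then 1 else 0) → b' = b) := by
  obtain ⟨b, hb⟩ := exists_sum_smul_ascPochhammer_eq
    (by simpa using Lagrange.basis_mem_degreeLT hγ.injOn (mem_univ (0 : Fin (N + 1))))
  refine ⟨b, (sum_mul_eval_ascPochhammer_eq_ite_iff hγ 0 b).2 hb, fun k => ?_, fun b' hb' => ?_⟩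
  · rw [factorial_mul_eq_sum_eval_neg_of_eq_sum_smul_ascPochhammer hb k]
    refine sum_congr rfl fun τ _ => ?_
    rw [Lagrange.eval_basis]
    congr 1
    refine prod_congr rfl fun ℓ _ => ?_
    rw [← neg_div_neg_eq]
    congr 1 <;> ring
  · have hb'b := ((sum_mul_eval_ascPochhammer_eq_ite_iff hγ 0 b').1 hb').trans hb.symm
    exact funext (Fintype.linearIndependent_iffₛ.1
      ((linearIndependent_ascPochhammer K).comp _ Fin.val_injective) b' b hb'b)

theorem stmt_19 (K : Type*) [Field K] [CharZero K] (N : ℕ)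
    (γ : Fin (N + 1) → K) (hγ : Function.Injective γ) :
    ∃ b : Fin (N + 1) → K,
      (∀ ℓ, ∑ j : Fin (N + 1), b j * (ascPochhammer K (j : ℕ)).eval (γ ℓ) =
        if ℓ = 0 then 1 else 0) ∧
      (∀ k : Fin (N + 1), ((k : ℕ).factorial : K) * b k =
        ∑ τ ∈ Finset.range ((k : ℕ) + 1), (-1) ^ τ * ((k : ℕ).choose τ) *
          ∏ ℓ ∈ Finset.univ.erase 0, (γ ℓ + (τ : K)) / (γ ℓ - γ 0)) ∧
      (∀ b' : Fin (N + 1) → K,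
        (∀ ℓ, ∑ j : Fin (N + 1), b' j * (ascPochhammer K (j : ℕ)).eval (γ ℓ) =
          if ℓ = 0 then 1 else 0) → b' = b) :=
  stmt_19_general K N γ hγ
end
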